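/- Let Δ ⊆ ℝ² be a lattice polygon, i.e. the convex hull of a finite subset of ℤ², with nonempty interior, and for w ∈ ℤ² let c_w = min_{y∈Δ} w·y. Then there exists a finite set P ⊆ ℤ²∖{0} such that for all x ∈ Δ, inf_{w∈ℤ²∖{0}} (w·x − c_w) = min_{w∈P} (w·x − c_w); in particular the weighted distance function l_Δ is a tropical polynomial on Δ (a minimum of finitely many affine functions with integer slopes, each nonnegative on Δ). -/
import Mathlib


/-- Scalar product of an integer vector with a real vector. -/
def dotR (w : ℤ × ℤ) (x : ℝ × ℝ) : ℝ :=
  (w.1 : ℝ) * x.1 + (w.2 : ℝ) * x.2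

/-- The support value `c_w = min_{y ∈ Δ} w·y`. -/
noncomputable def suppVal (Δ : Set (ℝ × ℝ)) (w : ℤ × ℤ) : ℝ :=
  sInf ((fun y => dotR w y) '' Δ)

/-- The weighted distance function `l_Δ(x) = inf_{w ∈ ℤ²∖{0}} (w·x − c_w)`. -/
noncomputable def wdist (Δ : Set (ℝ × ℝ)) (x : ℝ × ℝ) : ℝ :=
  ⨅ w : {w : ℤ × ℤ // w ≠ 0}, (dotR w.1 x - suppVal Δ w.1)

def dotZ (u v : ℤ × ℤ) : ℤ := u.1 * v.1 + u.2 * v.2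

lemma dotZ_comm (u v : ℤ × ℤ) : dotZ u v = dotZ v u := by simp only [dotZ]; ring

lemma dotZ_sub_left (u v b : ℤ × ℤ) : dotZ (u - v) b = dotZ u b - dotZ v b := by
  simp only [dotZ, Prod.fst_sub, Prod.snd_sub]; ring

lemma dotZ_sub_right (w u v : ℤ × ℤ) : dotZ w (u - v) = dotZ w u - dotZ w v := by
  simp only [dotZ, Prod.fst_sub, Prod.snd_sub]; ring

/-- Halving step: when `w` is deep inside the cone. -/
lemma step_half (D : Finset (ℤ × ℤ)) (R : ℤ) (hR : 1 ≤ R)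
    (hD : ∀ b ∈ D, |b.1| ≤ R ∧ |b.2| ≤ R)
    (w : ℤ × ℤ) (hw : ∀ b ∈ D, 0 ≤ dotZ w b)
    (hbig : 100 * R ^ 4 < max |w.1| |w.2|)
    (hcase : ∀ b ∈ D, b ≠ 0 → 4 * R ≤ dotZ w b) :
    ∃ u : ℤ × ℤ, u ≠ 0 ∧ max |u.1| |u.2| < max |w.1| |w.2| ∧
      (∀ b ∈ D, 0 ≤ dotZ u b) ∧ (∀ b ∈ D, 0 ≤ dotZ (w - u) b) := by
  have hR4 : 1 ≤ R ^ 4 := one_le_pow₀ hR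
  have h1 : 2 * (w.1 / 2) + w.1 % 2 = w.1 := Int.mul_ediv_add_emod w.1 2
  have h2 : 2 * (w.2 / 2) + w.2 % 2 = w.2 := Int.mul_ediv_add_emod w.2 2
  have e1 : 0 ≤ w.1 % 2 := Int.emod_nonneg _ (by norm_num)
  have e1' : w.1 % 2 ≤ 1 := by
    have := Int.emod_lt_of_pos w.1 (show (0:ℤ) < 2 by norm_num); linarith
  have e2 : 0 ≤ w.2 % 2 := Int.emod_nonneg _ (by norm_num)
  have e2' : w.2 % 2 ≤ 1 := by
    have := Int.emod_lt_of_pos w.2 (show (0:ℤ) < 2 by norm_num); linarith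
  have hu1 : 2 * (w.1 - w.1 / 2) = w.1 + w.1 % 2 := by linarith
  have hu2 : 2 * (w.2 - w.2 / 2) = w.2 + w.2 % 2 := by linarith
  refine ⟨(w.1 - w.1 / 2, w.2 - w.2 / 2), ?_, ?_, ?_, ?_⟩
  · intro h
    rw [Prod.ext_iff] at h
    have hz1 : w.1 - w.1 / 2 = 0 := h.1
    have hz2 : w.2 - w.2 / 2 = 0 := h.2
    have a1 : |w.1| ≤ 1 := abs_le.mpr ⟨by linarith, by linarith⟩
    have a2 : |w.2| ≤ 1 := abs_le.mpr ⟨by linarith, by linarith⟩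
    have : max |w.1| |w.2| ≤ 1 := max_le a1 a2
    nlinarith
  · have hM2 : 2 ≤ max |w.1| |w.2| := by nlinarith
    apply max_lt
    · have a1 : |2 * (w.1 - w.1 / 2)| ≤ |w.1| + 1 := by
        rw [hu1]
        calc |w.1 + w.1 % 2| ≤ |w.1| + |w.1 % 2| := abs_add_le _ _
          _ ≤ |w.1| + 1 := by rw [abs_of_nonneg e1]; linarith
      rw [abs_mul, abs_two] at a1
      have := le_max_left |w.1| |w.2|
      linarith
    · have a1 : |2 * (w.2 - w.2 / 2)| ≤ |w.2| + 1 := by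
        rw [hu2]
        calc |w.2 + w.2 % 2| ≤ |w.2| + |w.2 % 2| := abs_add_le _ _
          _ ≤ |w.2| + 1 := by rw [abs_of_nonneg e2]; linarith
      rw [abs_mul, abs_two] at a1
      have := le_max_right |w.1| |w.2|
      linarith
  · intro b hb
    rcases eq_or_ne b 0 with rfl | hbne
    · simp [dotZ]
    · have h4R := hcase b hb hbne
      have hB1 := abs_le.mp (hD b hb).1
      have hB2 := abs_le.mp (hD b hb).2
      have p1 : -R ≤ w.1 % 2 * b.1 := by
        nlinarith [mul_nonneg e1 (by linarith : (0:ℤ) ≤ b.1 + R),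
          mul_nonneg (by linarith : (0:ℤ) ≤ 1 - w.1 % 2) (by linarith : (0:ℤ) ≤ R)]
      have p2 : -R ≤ w.2 % 2 * b.2 := by
        nlinarith [mul_nonneg e2 (by linarith : (0:ℤ) ≤ b.2 + R),
          mul_nonneg (by linarith : (0:ℤ) ≤ 1 - w.2 % 2) (by linarith : (0:ℤ) ≤ R)]
      have hk : 2 * dotZ (w.1 - w.1 / 2, w.2 - w.2 / 2) b
          = dotZ w b + w.1 % 2 * b.1 + w.2 % 2 * b.2 := by
        simp only [dotZ]
        linear_combination b.1 * hu1 + b.2 * hu2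
      linarith
  · intro b hb
    rcases eq_or_ne b 0 with rfl | hbne
    · simp [dotZ]
    · have h4R := hcase b hb hbne
      have hB1 := abs_le.mp (hD b hb).1
      have hB2 := abs_le.mp (hD b hb).2
      have p1' : w.1 % 2 * b.1 ≤ R := by
        nlinarith [mul_nonneg e1 (by linarith : (0:ℤ) ≤ R - b.1),
          mul_nonneg (by linarith : (0:ℤ) ≤ 1 - w.1 % 2) (by linarith : (0:ℤ) ≤ R)]
      have p2' : w.2 % 2 * b.2 ≤ R := by
        nlinarith [mul_nonneg e2 (by linarith : (0:ℤ) ≤ R - b.2),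
          mul_nonneg (by linarith : (0:ℤ) ≤ 1 - w.2 % 2) (by linarith : (0:ℤ) ≤ R)]
      have hv1 : 2 * (w.1 - (w.1 - w.1 / 2)) = w.1 - w.1 % 2 := by linarith
      have hv2 : 2 * (w.2 - (w.2 - w.2 / 2)) = w.2 - w.2 % 2 := by linarith
      have hk : 2 * dotZ (w - (w.1 - w.1 / 2, w.2 - w.2 / 2)) b
          = dotZ w b - w.1 % 2 * b.1 - w.2 % 2 * b.2 := by
        simp only [dotZ, Prod.fst_sub, Prod.snd_sub]
        linear_combination b.1 * hv1 + b.2 * hv2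
      linarith

set_option maxHeartbeats 1000000 in
/-- Rotation step: when `w` is close to the boundary of the cone. -/
lemma step_rot (D : Finset (ℤ × ℤ)) (R : ℤ) (hR : 1 ≤ R)
    (hD : ∀ b ∈ D, |b.1| ≤ R ∧ |b.2| ≤ R)
    (w : ℤ × ℤ) (hw : ∀ b ∈ D, 0 ≤ dotZ w b)
    (hbig : 100 * R ^ 4 < max |w.1| |w.2|)
    (b0 : ℤ × ℤ) (hb0D : b0 ∈ D) (hb0 : b0 ≠ 0) (hs4 : dotZ w b0 < 4 * R) :
    ∃ u : ℤ × ℤ, u ≠ 0 ∧ max |u.1| |u.2| < max |w.1| |w.2| ∧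
      (∀ b ∈ D, 0 ≤ dotZ u b) ∧ (∀ b ∈ D, 0 ≤ dotZ (w - u) b) := by
  have hR2 : 1 ≤ R ^ 2 := one_le_pow₀ hR
  have hR4 : 1 ≤ R ^ 4 := one_le_pow₀ hR
  have hR24 : R ^ 2 ≤ R ^ 4 := by
    nlinarith [mul_nonneg (sq_nonneg R) (by linarith : (0:ℤ) ≤ R ^ 2 - 1)]
  have hR34 : R ^ 3 ≤ R ^ 4 := by
    nlinarith [mul_nonneg (mul_nonneg (by linarith : (0:ℤ) ≤ R)
      (mul_nonneg (by linarith : (0:ℤ) ≤ R) (by linarith : (0:ℤ) ≤ R)))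
      (by linarith : (0:ℤ) ≤ R - 1)]
  have hs0 : 0 ≤ dotZ w b0 := hw _ hb0D
  have hbb1 := abs_le.mp (hD b0 hb0D).1
  have hbb2 := abs_le.mp (hD b0 hb0D).2
  set q : ℤ × ℤ := (-b0.2, b0.1) with hq
  set p : ℤ × ℤ := if 0 ≤ dotZ w q then q else -q with hpdef
  have hpt : 0 ≤ dotZ w p := by
    rw [hpdef]; split_ifs with h
    · exact h
    · have hnq : dotZ w (-q) = -dotZ w q := by
        simp only [dotZ, Prod.fst_neg, Prod.snd_neg]; ring
      rw [hnq]; linarith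
  have hkey : ∀ b : ℤ × ℤ, dotZ b0 b0 * dotZ w b
      = dotZ w b0 * dotZ b0 b + dotZ w p * dotZ p b := by
    intro b
    rw [hpdef]
    split_ifs <;> simp only [dotZ, hq, Prod.fst_neg, Prod.snd_neg] <;> ring
  have hb0ne : b0.1 ≠ 0 ∨ b0.2 ≠ 0 := by
    by_contra h
    push_neg at h
    exact hb0 (Prod.ext h.1 h.2)
  have hn2a : 1 ≤ dotZ b0 b0 := by
    rcases hb0ne with h | h
    · have := Int.one_le_abs h
      simp only [dotZ]
      nlinarith [mul_self_nonneg b0.2, abs_mul_abs_self b0.1]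
    · have := Int.one_le_abs h
      simp only [dotZ]
      nlinarith [mul_self_nonneg b0.1, abs_mul_abs_self b0.2]
  have hn2b : dotZ b0 b0 ≤ 2 * R ^ 2 := by
    simp only [dotZ]
    nlinarith [mul_nonneg (by linarith : (0:ℤ) ≤ R - b0.1) (by linarith : (0:ℤ) ≤ b0.1 + R),
      mul_nonneg (by linarith : (0:ℤ) ≤ R - b0.2) (by linarith : (0:ℤ) ≤ b0.2 + R)]
  set M := max |w.1| |w.2| with hM
  have hM0 : 0 ≤ M := le_trans (abs_nonneg _) (le_max_left _ _)
  have hMsq : M ^ 2 ≤ dotZ w w := by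
    rcases max_choice |w.1| |w.2| with h | h <;> rw [hM, h] <;> simp only [dotZ, sq_abs] <;>
      nlinarith [mul_self_nonneg w.1, mul_self_nonneg w.2]
  have hww0 : 0 ≤ dotZ w w := by
    simp only [dotZ]; nlinarith [mul_self_nonneg w.1, mul_self_nonneg w.2]
  have hself : dotZ w b0 ^ 2 + dotZ w p ^ 2 = dotZ b0 b0 * dotZ w w := by
    have h := hkey w
    rw [dotZ_comm b0 w, dotZ_comm p w] at h
    linear_combination -h
  have h4 : dotZ w w ≤ dotZ b0 b0 * dotZ w w := le_mul_of_one_le_left hww0 hn2a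
  have hMM : (100 * R ^ 4 + 1) ^ 2 ≤ M ^ 2 :=
    pow_le_pow_left₀ (by positivity) (by linarith) 2
  have hs3 : dotZ w b0 ^ 2 ≤ 16 * R ^ 2 := by
    have := mul_le_mul hs4.le hs4.le hs0 (by linarith : (0:ℤ) ≤ 4 * R)
    nlinarith
  have h6 : (10 * R ^ 4) ^ 2 ≤ dotZ w p ^ 2 := by
    linarith [hself, h4, hMsq, hMM, hs3, hR24, hR4, sq_nonneg (R ^ 4)]
  have ht : 10 * R ^ 4 ≤ dotZ w p := by
    by_contra h
    push_neg at h
    have h7 := mul_self_lt_mul_self hpt h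
    have h8 : dotZ w p ^ 2 = dotZ w p * dotZ w p := by ring
    have h9 : (10 * R ^ 4) ^ 2 = (10 * R ^ 4) * (10 * R ^ 4) := by ring
    linarith
  -- bound on dotZ b0 b for b ∈ D
  have hdb : ∀ b ∈ D, |dotZ b0 b| ≤ 2 * R ^ 2 := by
    intro b hb
    simp only [dotZ]
    have t1 : |b0.1 * b.1| ≤ R * R := by
      rw [abs_mul]
      exact mul_le_mul (hD b0 hb0D).1 (hD b hb).1 (abs_nonneg _)
        (le_trans (abs_nonneg _) (hD b0 hb0D).1)
    have t2 : |b0.2 * b.2| ≤ R * R := by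
      rw [abs_mul]
      exact mul_le_mul (hD b0 hb0D).2 (hD b hb).2 (abs_nonneg _)
        (le_trans (abs_nonneg _) (hD b0 hb0D).2)
    calc |b0.1 * b.1 + b0.2 * b.2| ≤ |b0.1 * b.1| + |b0.2 * b.2| := abs_add_le _ _
      _ ≤ 2 * R ^ 2 := by nlinarith
  have hclaim1 : ∀ b ∈ D, 0 ≤ dotZ p b := by
    intro b hb
    by_contra hneg
    push_neg at hneg
    have hneg1 : dotZ p b ≤ -1 := by linarith
    have hdb' := abs_le.mp (hdb b hb)
    have hk := hkey b
    have hA1 : 0 ≤ dotZ b0 b0 * dotZ w b := mul_nonneg (by linarith) (hw b hb)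
    have c1 : dotZ w b0 * dotZ b0 b ≤ dotZ w b0 * (2 * R ^ 2) :=
      mul_le_mul_of_nonneg_left hdb'.2 hs0
    have c2 : dotZ w b0 * (2 * R ^ 2) ≤ (4 * R) * (2 * R ^ 2) :=
      mul_le_mul_of_nonneg_right (by linarith) (by positivity)
    have c3 : (4 * R) * (2 * R ^ 2) = 8 * R ^ 3 := by ring
    have hA3 : dotZ w p * dotZ p b ≤ -(10 * R ^ 4) := by
      calc dotZ w p * dotZ p b ≤ dotZ w p * (-1) :=
            mul_le_mul_of_nonneg_left hneg1 hpt
        _ ≤ -(10 * R ^ 4) := by linarith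
    linarith
  have hclaim2 : ∀ b ∈ D, 0 ≤ dotZ (w - p) b := by
    intro b hb
    rw [dotZ_sub_left]
    have h1 := hclaim1 b hb
    rcases h1.eq_or_lt with h | h
    · have hwb := hw b hb
      rw [← h]; linarith
    · have h1' : 1 ≤ dotZ p b := h
      have hdb' := abs_le.mp (hdb b hb)
      have hk := hkey b
      have c1 : dotZ w b0 * (-(2 * R ^ 2)) ≤ dotZ w b0 * dotZ b0 b :=
        mul_le_mul_of_nonneg_left (by linarith) hs0
      have c2 : (4 * R) * (-(2 * R ^ 2)) ≤ dotZ w b0 * (-(2 * R ^ 2)) :=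
        mul_le_mul_of_nonpos_right (le_of_lt hs4) (by nlinarith)
      have c3 : (4 * R) * (-(2 * R ^ 2)) = -(8 * R ^ 3) := by ring
      have hA3 : dotZ w p - dotZ b0 b0 ≤ (dotZ w p - dotZ b0 b0) * dotZ p b :=
        le_mul_of_one_le_right (by linarith) h1'
      have hfinal : 0 ≤ dotZ b0 b0 * (dotZ w b - dotZ p b) := by
        have expand : dotZ b0 b0 * (dotZ w b - dotZ p b)
            = dotZ w b0 * dotZ b0 b + (dotZ w p - dotZ b0 b0) * dotZ p b := by
          linear_combination hk
        rw [expand]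
        linarith
      by_contra hneg
      push_neg at hneg
      have hneg1 : dotZ w b - dotZ p b ≤ -1 := by linarith
      have : dotZ b0 b0 * (dotZ w b - dotZ p b) ≤ dotZ b0 b0 * (-1) :=
        mul_le_mul_of_nonneg_left hneg1 (by linarith)
      linarith
  refine ⟨p, ?_, ?_, hclaim1, hclaim2⟩
  · rw [hpdef]
    split_ifs <;> intro h <;> rw [Prod.ext_iff] at h <;>
      simp only [hq, Prod.fst_neg, Prod.snd_neg, Prod.fst_zero, Prod.snd_zero,
        neg_eq_zero] at h <;>
      exact hb0 (Prod.ext_iff.mpr ⟨h.2, h.1⟩)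
  · have hp1 : |p.1| ≤ R ∧ |p.2| ≤ R := by
      rw [hpdef]
      split_ifs <;> simp only [hq, Prod.fst_neg, Prod.snd_neg, abs_neg, neg_neg] <;>
        exact ⟨(hD b0 hb0D).2, (hD b0 hb0D).1⟩
    apply max_lt <;> nlinarith [hp1.1, hp1.2]

lemma step_lemma (D : Finset (ℤ × ℤ)) (R : ℤ) (hR : 1 ≤ R)
    (hD : ∀ b ∈ D, |b.1| ≤ R ∧ |b.2| ≤ R)
    (w : ℤ × ℤ) (hw : ∀ b ∈ D, 0 ≤ dotZ w b)
    (hbig : 100 * R ^ 4 < max |w.1| |w.2|) :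
    ∃ u : ℤ × ℤ, u ≠ 0 ∧ max |u.1| |u.2| < max |w.1| |w.2| ∧
      (∀ b ∈ D, 0 ≤ dotZ u b) ∧ (∀ b ∈ D, 0 ≤ dotZ (w - u) b) := by
  by_cases hcase : ∃ b0 ∈ D, b0 ≠ 0 ∧ dotZ w b0 < 4 * R
  · obtain ⟨b0, hb0D, hb0, hs4⟩ := hcase
    exact step_rot D R hR hD w hw hbig b0 hb0D hb0 hs4
  · push_neg at hcase
    exact step_half D R hR hD w hw hbig (fun b hb hbne => hcase b hb hbne)

lemma dotR_int (w a : ℤ × ℤ) : dotR w ((a.1 : ℝ), (a.2 : ℝ)) = (dotZ w a : ℝ) := by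
  simp only [dotR, dotZ]; push_cast; ring

lemma dotR_isLinear (w : ℤ × ℤ) : IsLinearMap ℝ (fun x : ℝ × ℝ => dotR w x) := by
  constructor
  · intro x y; simp only [dotR, Prod.fst_add, Prod.snd_add]; ring
  · intro c x; simp only [dotR, Prod.smul_fst, Prod.smul_snd, smul_eq_mul]; ring

lemma dotR_lb (A : Finset (ℤ × ℤ)) (Δ : Set (ℝ × ℝ))
    (hΔ : Δ = convexHull ℝ ((fun w : ℤ × ℤ => ((w.1 : ℝ), (w.2 : ℝ))) '' (A : Set (ℤ × ℤ))))
    (w : ℤ × ℤ) (c : ℤ) (hc : ∀ a ∈ A, c ≤ dotZ w a) :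
    ∀ x ∈ Δ, (c : ℝ) ≤ dotR w x := by
  intro x hx
  rw [hΔ] at hx
  have hsub : convexHull ℝ ((fun w : ℤ × ℤ => ((w.1 : ℝ), (w.2 : ℝ))) '' (A : Set (ℤ × ℤ)))
      ⊆ {y : ℝ × ℝ | (c : ℝ) ≤ dotR w y} := by
    apply convexHull_min
    · rintro y ⟨a, ha, rfl⟩
      simp only [Set.mem_setOf_eq, dotR_int]
      exact_mod_cast hc a ha
    · exact convex_halfSpace_ge (dotR_isLinear w) _
  exact hsub hx

lemma suppVal_eq_of_min (A : Finset (ℤ × ℤ)) (Δ : Set (ℝ × ℝ))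
    (hΔ : Δ = convexHull ℝ ((fun w : ℤ × ℤ => ((w.1 : ℝ), (w.2 : ℝ))) '' (A : Set (ℤ × ℤ))))
    (w : ℤ × ℤ) (a0 : ℤ × ℤ) (ha0 : a0 ∈ A)
    (hmin : ∀ a ∈ A, dotZ w a0 ≤ dotZ w a) :
    suppVal Δ w = (dotZ w a0 : ℝ) := by
  have hmem : ((a0.1 : ℝ), (a0.2 : ℝ)) ∈ Δ := by
    rw [hΔ]; exact subset_convexHull ℝ _ ⟨a0, ha0, rfl⟩
  have hlb := dotR_lb A Δ hΔ w (dotZ w a0) hmin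
  unfold suppVal
  apply le_antisymm
  · exact csInf_le ⟨(dotZ w a0 : ℝ), by rintro y ⟨z, hz, rfl⟩; exact hlb z hz⟩
      ⟨_, hmem, dotR_int w a0⟩
  · exact le_csInf ⟨_, _, hmem, rfl⟩ (by rintro y ⟨z, hz, rfl⟩; exact hlb z hz)

/-- On a lattice polygon the weighted distance function is a tropical polynomial: the
infimum over all nonzero integer vectors is achieved as a minimum over some finite set of
nonzero integer vectors. -/
theorem weighted_distance_is_tropical_polynomial (A : Finset (ℤ × ℤ))
    (Δ : Set (ℝ × ℝ))
    (hΔ : Δ = convexHull ℝ ((fun w : ℤ × ℤ => ((w.1 : ℝ), (w.2 : ℝ))) '' (A : Set (ℤ × ℤ))))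
    (hint : (interior Δ).Nonempty) :
    ∃ (P : Finset (ℤ × ℤ)) (hP : P.Nonempty), (0, 0) ∉ P ∧
      ∀ x ∈ Δ, wdist Δ x = P.inf' hP (fun w => dotR w x - suppVal Δ w) := by
  have hA : A.Nonempty := by
    rcases A.eq_empty_or_nonempty with h | h
    · exfalso
      rw [h] at hΔ
      simp only [Finset.coe_empty, Set.image_empty, convexHull_empty] at hΔ
      rw [hΔ] at hint
      simp at hint
    · exact h
  obtain ⟨R, hR1, hRa⟩ : ∃ R : ℤ, 1 ≤ R ∧ ∀ a ∈ A, |a.1| ≤ R ∧ |a.2| ≤ R := by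
    refine ⟨1 + ((A.sup fun a => a.1.natAbs ⊔ a.2.natAbs : ℕ) : ℤ),
      by have := Int.natCast_nonneg (A.sup fun a => a.1.natAbs ⊔ a.2.natAbs); linarith, ?_⟩
    intro a ha
    have h1 : a.1.natAbs ≤ A.sup fun a => a.1.natAbs ⊔ a.2.natAbs :=
      le_trans (le_max_left _ _) (Finset.le_sup (f := fun a => a.1.natAbs ⊔ a.2.natAbs) ha)
    have h2 : a.2.natAbs ≤ A.sup fun a => a.1.natAbs ⊔ a.2.natAbs :=
      le_trans (le_max_right _ _) (Finset.le_sup (f := fun a => a.1.natAbs ⊔ a.2.natAbs) ha)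
    have c1 : (a.1.natAbs : ℤ) ≤ ((A.sup fun a => a.1.natAbs ⊔ a.2.natAbs : ℕ) : ℤ) :=
      Nat.cast_le.mpr h1
    have c2 : (a.2.natAbs : ℤ) ≤ ((A.sup fun a => a.1.natAbs ⊔ a.2.natAbs : ℕ) : ℤ) :=
      Nat.cast_le.mpr h2
    rw [Int.abs_eq_natAbs, Int.abs_eq_natAbs]
    constructor <;> linarith
  set N : ℤ := 100 * (2 * R) ^ 4 with hN
  have h16 : (1:ℤ) ≤ (2 * R) ^ 4 := one_le_pow₀ (by linarith)
  have hN1 : 1 ≤ N := by rw [hN]; linarith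
  set P : Finset (ℤ × ℤ) := (Finset.Icc ((-N, -N) : ℤ × ℤ) (N, N)).erase 0 with hPdef
  have hmemP : ∀ v : ℤ × ℤ, v ∈ P ↔ v ≠ 0 ∧ |v.1| ≤ N ∧ |v.2| ≤ N := by
    intro v
    rw [hPdef, Finset.mem_erase, Finset.mem_Icc]
    simp only [Prod.le_def, abs_le]
    tauto
  have hP : P.Nonempty := by
    refine ⟨(0, 1), (hmemP _).mpr ⟨by decide, ?_, ?_⟩⟩
    · show |(0 : ℤ)| ≤ N
      rw [abs_zero]; linarith
    · show |(1 : ℤ)| ≤ N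
      rw [abs_one]; linarith
  have h00 : ((0, 0) : ℤ × ℤ) ∉ P := fun h => ((hmemP _).mp h).1 rfl
  refine ⟨P, hP, h00, ?_⟩
  intro x hx
  have key : ∀ n : ℕ, ∀ w : ℤ × ℤ, w ≠ 0 → w.1.natAbs ⊔ w.2.natAbs = n →
      P.inf' hP (fun p => dotR p x - suppVal Δ p) ≤ dotR w x - suppVal Δ w := by
    intro n
    induction n using Nat.strong_induction_on with
    | _ n IH =>
      intro w hw hn
      by_cases hsmall : max |w.1| |w.2| ≤ N
      · exact Finset.inf'_le _ ((hmemP w).mpr ⟨hw, le_trans (le_max_left _ _) hsmall,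
          le_trans (le_max_right _ _) hsmall⟩)
      · push_neg at hsmall
        rw [hN] at hsmall
        obtain ⟨a0, ha0, hmin⟩ := A.exists_min_image (fun a => dotZ w a) hA
        set D : Finset (ℤ × ℤ) := A.image (fun a => a - a0) with hDdef
        have hD : ∀ b ∈ D, |b.1| ≤ 2 * R ∧ |b.2| ≤ 2 * R := by
          intro b hb
          rw [hDdef, Finset.mem_image] at hb
          obtain ⟨a, ha, rfl⟩ := hb
          have u1 := abs_le.mp (hRa a ha).1
          have u2 := abs_le.mp (hRa a ha).2
          have v1 := abs_le.mp (hRa a0 ha0).1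
          have v2 := abs_le.mp (hRa a0 ha0).2
          constructor <;> simp only [Prod.fst_sub, Prod.snd_sub] <;> rw [abs_le] <;>
            constructor <;> linarith
        have hwD : ∀ b ∈ D, 0 ≤ dotZ w b := by
          intro b hb
          rw [hDdef, Finset.mem_image] at hb
          obtain ⟨a, ha, rfl⟩ := hb
          rw [dotZ_sub_right]
          have := hmin a ha
          linarith
        obtain ⟨u, hu0, hult, huD, hwuD⟩ := step_lemma D (2 * R) (by linarith) hD w hwD hsmall
        have hminu : ∀ a ∈ A, dotZ u a0 ≤ dotZ u a := by
          intro a ha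
          have := huD (a - a0) (by rw [hDdef]; exact Finset.mem_image_of_mem _ ha)
          rw [dotZ_sub_right] at this
          linarith
        have hminwu : ∀ a ∈ A, dotZ (w - u) a0 ≤ dotZ (w - u) a := by
          intro a ha
          have := hwuD (a - a0) (by rw [hDdef]; exact Finset.mem_image_of_mem _ ha)
          rw [dotZ_sub_right] at this
          linarith
        have hsw := suppVal_eq_of_min A Δ hΔ w a0 ha0 hmin
        have hsu := suppVal_eq_of_min A Δ hΔ u a0 ha0 hminu
        have hswu := suppVal_eq_of_min A Δ hΔ (w - u) a0 ha0 hminwu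
        have hnonneg : (0 : ℝ) ≤ dotR (w - u) x - suppVal Δ (w - u) := by
          rw [hswu]
          have := dotR_lb A Δ hΔ (w - u) (dotZ (w - u) a0) hminwu x hx
          linarith
        have hsplit : dotR w x - suppVal Δ w
            = (dotR u x - suppVal Δ u) + (dotR (w - u) x - suppVal Δ (w - u)) := by
          rw [hsw, hsu, hswu]
          have e1 : dotR w x = dotR u x + dotR (w - u) x := by
            simp only [dotR, Prod.fst_sub, Prod.snd_sub]; push_cast; ring
          have e2 : (dotZ (w - u) a0 : ℝ) = (dotZ w a0 : ℝ) - (dotZ u a0 : ℝ) := by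
            rw [dotZ_sub_left]; push_cast; ring
          rw [e1, e2]; ring
        have hsmaller : u.1.natAbs ⊔ u.2.natAbs < n := by
          have hc1 : ((u.1.natAbs ⊔ u.2.natAbs : ℕ) : ℤ) = max |u.1| |u.2| := by
            rw [Nat.cast_max, Int.natCast_natAbs, Int.natCast_natAbs]
          have hc2 : ((w.1.natAbs ⊔ w.2.natAbs : ℕ) : ℤ) = max |w.1| |w.2| := by
            rw [Nat.cast_max, Int.natCast_natAbs, Int.natCast_natAbs]
          have : ((u.1.natAbs ⊔ u.2.natAbs : ℕ) : ℤ) < ((w.1.natAbs ⊔ w.2.natAbs : ℕ) : ℤ) := by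
            rw [hc1, hc2]; exact hult
          rw [hn] at this
          exact_mod_cast this
        have hIHu := IH _ hsmaller u hu0 rfl
        rw [hsplit]
        linarith
  have hbdd : BddBelow (Set.range fun w : {w : ℤ × ℤ // w ≠ 0} =>
      dotR w.1 x - suppVal Δ w.1) := by
    refine ⟨P.inf' hP (fun p => dotR p x - suppVal Δ p), ?_⟩
    rintro y ⟨⟨w, hw⟩, rfl⟩
    exact key _ w hw rfl
  apply le_antisymm
  · obtain ⟨p, hpP, hpe⟩ := Finset.exists_mem_eq_inf' hP (fun p => dotR p x - suppVal Δ p)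
    rw [hpe]
    exact ciInf_le hbdd ⟨p, ((hmemP p).mp hpP).1⟩
  · have : Nonempty {w : ℤ × ℤ // w ≠ 0} := ⟨⟨(0, 1), by decide⟩⟩
    exact le_ciInf fun w => key _ w.1 w.2 rfl
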